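/- arXiv:2401.12626 — 2 statements merged into one kernel-verified Lean document; each statement's English description precedes it below -/
import Mathlib

section
/- Let f(z) be the k×k symbol of a tridiagonal k-Toeplitz operator with entries a_i on the diagonal, b_i on the superdiagonal, c_i on the subdiagonal, with corner entries c_k z in position (1,k) and b_k z^{-1} in position (k,1). Then for every λ ∈ ℂ and every nonzero z ∈ ℂ, det(f(z) − λI) = (−1)^{k+1}(∏_{i=1}^k c_i) z + (−1)^{k+1}(∏_{i=1}^k b_i) z^{-1} + g(λ), where g(λ) = det(A₀ − λI) − b_k c_k p(λ), A₀ is the k×k tridiagonal matrix with diagonal a_i, superdiagonal b_i, subdiagonal c_i, and p(λ) is the characteristic-type determinant of the interior (k−2)×(k−2) tridiagonal submatrix with diagonal a_2,…,a_{k−1} (with p = 0 for k = 1 and p = 1 for k = 2). -/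
/-!
`symb a b c z - λ` is `A₀ - λ` perturbed by the two corner entries `z c_k` at `(1, k)` and
`z⁻¹ b_k` at `(k, 1)`. Expanding the determinant multilinearly in the first and last rows gives
`det (A₀ - λ)` plus three cofactor terms. Deleting the first row and last column of `A₀ - λ`
(resp. the last row and first column) leaves a triangular matrix with diagonal `c_1, …, c_{k-1}`
(resp. `b_1, …, b_{k-1}`); the cofactor of both corners is `-p(λ)`, and there `z z⁻¹ = 1`.
-/

open scoped BigOperators
open Matrix

def tridiagA0 {k : ℕ} (a b c : Fin (k+1) → ℂ) : Matrix (Fin (k+1)) (Fin (k+1)) ℂ :=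
  Matrix.of fun i j =>
    (if i = j then a i else 0) + (if (j : ℕ) = (i : ℕ) + 1 then b i else 0) +
      (if (i : ℕ) = (j : ℕ) + 1 then c j else 0)

def cornerAm1 {k : ℕ} (b : Fin (k+1) → ℂ) : Matrix (Fin (k+1)) (Fin (k+1)) ℂ :=
  Matrix.of fun i j => if i = Fin.last k ∧ j = 0 then b (Fin.last k) else 0

def cornerA1 {k : ℕ} (c : Fin (k+1) → ℂ) : Matrix (Fin (k+1)) (Fin (k+1)) ℂ :=
  Matrix.of fun i j => if i = 0 ∧ j = Fin.last k then c (Fin.last k) else 0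

noncomputable def symb {k : ℕ} (a b c : Fin (k+1) → ℂ) (z : ℂ) : Matrix (Fin (k+1)) (Fin (k+1)) ℂ :=
  z⁻¹ • cornerAm1 b + tridiagA0 a b c + z • cornerA1 c

/-- The paper's `(k-2)×(k-2)` interior block of `A₀ - λ`: here the matrices have size `k + 1`,
so the interior block has size `k - 1`. -/
def interiorMat {k : ℕ} (a b c : Fin (k+1) → ℂ) (lam : ℂ) :
    Matrix (Fin (k-1)) (Fin (k-1)) ℂ :=
  Matrix.of fun i j =>
    (if i = j then a ⟨(i : ℕ) + 1, by have h := i.2; omega⟩ - lam else 0) +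
      (if (j : ℕ) = (i : ℕ) + 1 then b ⟨(i : ℕ) + 1, by have h := i.2; omega⟩ else 0) +
      (if (i : ℕ) = (j : ℕ) + 1 then c ⟨(j : ℕ) + 1, by have h := j.2; omega⟩ else 0)

/-- The paper's case `k = 2` is `k = 1` here, where the interior block is empty and has
determinant `1`. -/
def pPoly {k : ℕ} (a b c : Fin (k+1) → ℂ) (lam : ℂ) : ℂ :=
  if k = 0 then 0 else (interiorMat a b c lam).det

def gPoly {k : ℕ} (a b c : Fin (k+1) → ℂ) (lam : ℂ) : ℂ :=
  (tridiagA0 a b c - lam • 1).det - b (Fin.last k) * c (Fin.last k) * pPoly a b c lam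

namespace Matrix

variable {R ι : Type*} [CommRing R] [DecidableEq ι]

theorem add_single_eq_updateRow (M : Matrix ι ι R) (i j : ι) (x : R) :
    M + single i j x = M.updateRow i (M i + Pi.single j x) := by
  ext i' j'
  rcases eq_or_ne i' i with rfl | hi
  · simp [Pi.single_apply, single_apply, eq_comm]
  · simp [updateRow_ne hi, single_apply_of_row_ne hi.symm]

theorem updateRow_add_single_of_ne (M : Matrix ι ι R) {i i' : ι} (h : i' ≠ i) (j : ι) (x : R)
    (r : ι → R) : (M + single i' j x).updateRow i r = M.updateRow i r + single i' j x := by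
  ext a b
  rcases eq_or_ne a i with rfl | ha
  · simp [single_apply_of_row_ne h]
  · simp [updateRow_ne ha]

variable [Fintype ι]

theorem det_add_single (M : Matrix ι ι R) (i j : ι) (x : R) :
    (M + single i j x).det = M.det + x * adjugate M j i := by
  have hx : Pi.single j x = x • Pi.single j (1 : R) := by
    rw [← Pi.single_smul', smul_eq_mul, mul_one]
  rw [add_single_eq_updateRow, det_updateRow_add, updateRow_eq_self, hx, det_updateRow_smul,
    adjugate_apply]

theorem det_add_single_add_single (M : Matrix ι ι R) {i i' : ι} (h : i' ≠ i) (j j' : ι)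
    (x y : R) :
    (M + single i j x + single i' j' y).det =
      M.det + x * adjugate M j i + y * adjugate M j' i' +
        x * y * adjugate (M.updateRow i' (Pi.single j' 1)) j i := by
  rw [det_add_single, det_add_single, adjugate_apply (M + _), updateRow_add_single_of_ne _ h.symm,
    det_add_single]
  simp only [adjugate_apply]
  ring

theorem adjugate_last_zero {n : ℕ} (A : Matrix (Fin (n + 1)) (Fin (n + 1)) R) :
    adjugate A (Fin.last n) 0 = (-1) ^ n * (A.submatrix Fin.succ Fin.castSucc).det := by
  rw [adjugate_fin_succ_eq_det_submatrix, Fin.succAbove_zero, Fin.succAbove_last]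
  simp

theorem adjugate_zero_last {n : ℕ} (A : Matrix (Fin (n + 1)) (Fin (n + 1)) R) :
    adjugate A 0 (Fin.last n) = (-1) ^ n * (A.submatrix Fin.castSucc Fin.succ).det := by
  rw [adjugate_fin_succ_eq_det_submatrix, Fin.succAbove_zero, Fin.succAbove_last]
  simp

theorem adjugate_updateRow_last_single_zero {n : ℕ} (A : Matrix (Fin (n + 2)) (Fin (n + 2)) R) :
    adjugate (A.updateRow (Fin.last (n + 1)) (Pi.single 0 1)) (Fin.last (n + 1)) 0 =
      -(A.submatrix (fun i : Fin n => i.succ.castSucc) (fun j => j.succ.castSucc)).det := by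
  have hrow : (A.updateRow (Fin.last (n + 1)) (Pi.single 0 1)).submatrix Fin.succ Fin.castSucc =
      (A.submatrix Fin.succ Fin.castSucc).updateRow (Fin.last n) (Pi.single 0 1) := by
    ext i j
    rcases eq_or_ne i (Fin.last n) with rfl | hi
    · simp [Pi.single_apply]
    · rw [submatrix_apply, updateRow_ne (by simpa using hi), updateRow_ne hi, submatrix_apply]
  rw [adjugate_last_zero, hrow, ← adjugate_apply, adjugate_zero_last, submatrix_submatrix]
  have hsign : (-1 : R) ^ (n + 1) * (-1) ^ n = -1 := by
    rw [pow_succ, mul_right_comm, ← mul_pow]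
    simp
  simp only [Function.comp_def, Fin.succ_castSucc]
  rw [← mul_assoc, hsign, neg_one_mul]

end Matrix

section Tridiagonal

theorem tridiagA0_sub_smul_one_apply {k : ℕ} (a b c : Fin (k + 1) → ℂ) (lam : ℂ)
    (i j : Fin (k + 1)) :
    (tridiagA0 a b c - lam • 1) i j =
      (if i = j then a i - lam else 0) + (if (j : ℕ) = i + 1 then b i else 0) +
        (if (i : ℕ) = j + 1 then c j else 0) := by
  simp only [Matrix.sub_apply, Matrix.smul_apply, one_apply, tridiagA0, of_apply, smul_eq_mul]
  split_ifs <;> ring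

theorem cornerA1_eq_single {k : ℕ} (c : Fin (k + 1) → ℂ) :
    cornerA1 c = single 0 (Fin.last k) (c (Fin.last k)) := by
  ext i j
  simp [cornerA1, single_apply, eq_comm]

theorem cornerAm1_eq_single {k : ℕ} (b : Fin (k + 1) → ℂ) :
    cornerAm1 b = single (Fin.last k) 0 (b (Fin.last k)) := by
  ext i j
  simp [cornerAm1, single_apply, eq_comm]

theorem symb_sub_smul_one {k : ℕ} (a b c : Fin (k + 1) → ℂ) (lam z : ℂ) :
    symb a b c z - lam • 1 =
      tridiagA0 a b c - lam • 1 + single 0 (Fin.last k) (z * c (Fin.last k)) +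
        single (Fin.last k) 0 (z⁻¹ * b (Fin.last k)) := by
  rw [symb, cornerA1_eq_single, cornerAm1_eq_single, smul_single, smul_single, smul_eq_mul,
    smul_eq_mul]
  abel

variable {m : ℕ} (a b c : Fin (m + 2) → ℂ) (lam : ℂ)

theorem det_tridiagA0_sub_smul_one_submatrix_succ_castSucc :
    ((tridiagA0 a b c - lam • 1).submatrix Fin.succ Fin.castSucc).det =
      ∏ i : Fin (m + 1), c i.castSucc := by
  rw [det_of_isUpperTriangular]
  · refine Finset.prod_congr rfl fun i _ => ?_
    simp only [submatrix_apply, tridiagA0_sub_smul_one_apply, Fin.ext_iff, Fin.val_succ,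
      Fin.val_castSucc]
    split_ifs <;> first | omega | simp
  · intro i j hji
    have hji : (j : ℕ) < i := hji
    simp only [submatrix_apply, tridiagA0_sub_smul_one_apply, Fin.ext_iff, Fin.val_succ,
      Fin.val_castSucc]
    split_ifs <;> first | omega | simp

theorem det_tridiagA0_sub_smul_one_submatrix_castSucc_succ :
    ((tridiagA0 a b c - lam • 1).submatrix Fin.castSucc Fin.succ).det =
      ∏ i : Fin (m + 1), b i.castSucc := by
  rw [det_of_isLowerTriangular]
  · refine Finset.prod_congr rfl fun i _ => ?_
    simp only [submatrix_apply, tridiagA0_sub_smul_one_apply, Fin.ext_iff, Fin.val_succ,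
      Fin.val_castSucc]
    split_ifs <;> first | omega | simp
  · intro i j hij
    have hij : (i : ℕ) < j := hij
    simp only [submatrix_apply, tridiagA0_sub_smul_one_apply, Fin.ext_iff, Fin.val_succ,
      Fin.val_castSucc]
    split_ifs <;> first | omega | simp

theorem tridiagA0_sub_smul_one_submatrix_interior :
    (tridiagA0 a b c - lam • 1).submatrix (fun i : Fin m => i.succ.castSucc)
      (fun j : Fin m => j.succ.castSucc) = interiorMat a b c lam := by
  ext i j
  simp only [submatrix_apply, tridiagA0_sub_smul_one_apply, interiorMat, of_apply, Fin.ext_iff,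
    Fin.val_succ, Fin.val_castSucc, add_left_inj]
  rfl

end Tridiagonal

/-- determinant expansion of the symbol of a tridiagonal `k`-Toeplitz operator. -/
theorem stmt0 (k : ℕ) (a b c : Fin (k+1) → ℂ) (lam z : ℂ) (hz : z ≠ 0) :
    (symb a b c z - lam • 1).det =
      (-1 : ℂ) ^ (k + 1 + 1) * (∏ i, c i) * z +
        (-1 : ℂ) ^ (k + 1 + 1) * (∏ i, b i) * z⁻¹ + gPoly a b c lam := by
  rcases k with _ | m
  · rw [symb_sub_smul_one, gPoly, pPoly, if_pos rfl, det_fin_one, det_fin_one]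
    simp only [Fin.last_zero, Matrix.add_apply, Matrix.sub_apply, Matrix.smul_apply, one_apply_eq,
      single_apply_same, smul_eq_mul, Fin.prod_univ_succ, Fin.prod_univ_zero]
    ring
  · rw [symb_sub_smul_one, det_add_single_add_single _ (Fin.last_pos).ne', adjugate_last_zero,
      adjugate_zero_last, adjugate_updateRow_last_single_zero,
      det_tridiagA0_sub_smul_one_submatrix_succ_castSucc,
      det_tridiagA0_sub_smul_one_submatrix_castSucc_succ,
      tridiagA0_sub_smul_one_submatrix_interior, gPoly, pPoly, if_neg m.succ_ne_zero,
      Fin.prod_univ_castSucc c, Fin.prod_univ_castSucc b]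
    field_simp
    ring
end

section
/- Consider the semi-infinite tridiagonal 2-Toeplitz operator T̃ on complex sequences given by (T̃u)_1 = u_2, (T̃u)_{2m} = u_{2m−1} + u_{2m} + 2u_{2m+1}, (T̃u)_{2m+1} = 2u_{2m} + u_{2m+2} for m ≥ 1. Then the sequence ũ with ũ_{2m+1} = (−1/2)^m and ũ_{2m} = 0 for all m ≥ 0 lies in ℓ² and satisfies T̃ũ = 0; in particular 0 is an eigenvalue of T̃ acting on ℓ². -/
lemma summable_sq_norm_of_odd_geometric {𝕜 : Type*} [NormedDivisionRing 𝕜] {u : ℕ → 𝕜}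
    {r : 𝕜} (hr : ‖r‖ < 1) (hodd : ∀ m : ℕ, u (2 * m + 1) = r ^ m)
    (heven : ∀ m : ℕ, u (2 * m) = 0) :
    Summable fun n : ℕ => ‖u n‖ ^ 2 := by
  refine Summable.even_add_odd ?_ ?_
  · simp only [heven, norm_zero, zero_pow two_ne_zero]
    exact summable_zero
  · have hsq : ∀ m : ℕ, ‖u (2 * m + 1)‖ ^ 2 = (‖r‖ ^ 2) ^ m := fun m => by
      rw [hodd, norm_pow, ← pow_mul, ← pow_mul, mul_comm]
    simp only [hsq]
    exact summable_geometric_of_lt_one (by positivity)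
      (pow_lt_one₀ (norm_nonneg r) hr two_ne_zero)

/-- the sequence `ũ` with `ũ_{2m+1} = (-1/2)^m` and `ũ_{2m} = 0` is a nonzero
square-summable sequence annihilated by the tridiagonal 2-Toeplitz operator `T̃` given by
`(T̃u)_1 = u_2`, `(T̃u)_{2m} = u_{2m-1} + u_{2m} + 2u_{2m+1}`,
`(T̃u)_{2m+1} = 2u_{2m} + u_{2m+2}`; in particular `0` is an eigenvalue of `T̃` on `ℓ²`. -/
theorem stmt4 (u : ℕ → ℂ)
    (hodd : ∀ m : ℕ, u (2 * m + 1) = (-(1 : ℂ) / 2) ^ m)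
    (heven : ∀ m : ℕ, u (2 * m) = 0) :
    Summable (fun n : ℕ => ‖u n‖ ^ 2) ∧
      u 1 = 1 ∧
      u 2 = 0 ∧
      (∀ m : ℕ, 1 ≤ m →
        u (2 * m - 1) + u (2 * m) + 2 * u (2 * m + 1) = 0 ∧
          2 * u (2 * m) + u (2 * m + 2) = 0) := by
  refine ⟨summable_sq_norm_of_odd_geometric (by norm_num) hodd heven,
    by simpa using hodd 0, by simpa using heven 1, fun m hm => ?_⟩
  obtain ⟨k, rfl⟩ := Nat.exists_eq_add_of_le' hm
  rw [show 2 * (k + 1) - 1 = 2 * k + 1 by omega, show 2 * (k + 1) + 2 = 2 * (k + 2) by ring,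
    hodd, hodd, heven, heven, pow_succ]
  -- the even rows reduce to `r ^ k * (1 + 2 * r) = 0` at `r = -1/2`, the odd rows to `0 = 0`
  constructor <;> ring
end
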